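/- Suppose α ∈ ℝ² satisfies |⟨α, k⟩| ≥ c/|k|^{7} for all nonzero k ∈ ℤ², for some c > 0 (as holds for α = (1,π) by Salikhov's irrationality measure for π). Then there exists c' > 0 such that for all mean-zero f ∈ H¹(𝕋²): ‖∇f‖_{L²}^{7/8}·‖⟨∇f, α⟩‖_{L²}^{1/8} ≥ c'·‖f‖_{L²}. -/

import Mathlib

open Real

/-! For `k ≠ 0` the Diophantine condition says `c² ≤ |k|^{2n} ⟨α,k⟩²`, i.e.
`c^{2/(n+1)} ≤ (|k|²)^{n/(n+1)} (⟨α,k⟩²)^{1/(n+1)}`. Multiplying by `|aₖ|²` and summing over `k`,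
Hölder's inequality with the conjugate exponents `(n+1)/n` and `n+1` turns the right-hand side into
`‖∇f‖^{2n/(n+1)} ‖⟨∇f,α⟩‖^{2/(n+1)}`, so no truncation in frequency is needed. Here `n = 7`. -/

/- We model a mean-zero function `f ∈ H¹(𝕋²)` on the flat torus `𝕋² = ℝ²/(2πℤ)²`
by its Fourier coefficients `a : ℤ × ℤ → ℂ`, `f = Σ aₖ e^{ik·x}`, `a₀ = 0`.
By Parseval, `‖f‖²_{L²} = (2π)² Σ |aₖ|²`, `‖∇f‖²_{L²} = (2π)² Σ |k|²|aₖ|²` and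
`‖⟨∇f,α⟩‖²_{L²} = (2π)² Σ ⟨k,α⟩²|aₖ|²`.  All inequalities below are homogeneous
in the number of `L²`-norm factors, so the constant `(2π)²` is harmlessly dropped. -/

/-- `‖f‖²_{L²(𝕋²)}` (modulo the factor `(2π)²`). -/
noncomputable def normSq (a : ℤ × ℤ → ℂ) : ℝ := ∑' k : ℤ × ℤ, ‖a k‖ ^ 2

/-- `‖∇f‖²_{L²(𝕋²)}` (modulo the factor `(2π)²`). -/
noncomputable def gradSq (a : ℤ × ℤ → ℂ) : ℝ :=
  ∑' k : ℤ × ℤ, (((k.1 : ℝ)) ^ 2 + ((k.2 : ℝ)) ^ 2) * ‖a k‖ ^ 2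

/-- `‖⟨∇f, α⟩‖²_{L²(𝕋²)}` (modulo the factor `(2π)²`). -/
noncomputable def dirSq (α : ℝ × ℝ) (a : ℤ × ℤ → ℂ) : ℝ :=
  ∑' k : ℤ × ℤ, (α.1 * k.1 + α.2 * k.2) ^ 2 * ‖a k‖ ^ 2

/-- `f ∈ H¹(𝕋²)`. -/
def IsH1 (a : ℤ × ℤ → ℂ) : Prop :=
  Summable (fun k : ℤ × ℤ => ‖a k‖ ^ 2) ∧
  Summable (fun k : ℤ × ℤ => (((k.1 : ℝ)) ^ 2 + ((k.2 : ℝ)) ^ 2) * ‖a k‖ ^ 2)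

section Interpolation

variable {ι : Type*}

theorem summable_and_tsum_rpow_mul_rpow_le {x y : ι → ℝ} {p q : ℝ} (hp : 0 < p) (hq : 0 < q)
    (hpq : p + q = 1) (hx : ∀ i, 0 ≤ x i) (hy : ∀ i, 0 ≤ y i) (hxs : Summable x)
    (hys : Summable y) :
    Summable (fun i => x i ^ p * y i ^ q) ∧
      ∑' i, x i ^ p * y i ^ q ≤ (∑' i, x i) ^ p * (∑' i, y i) ^ q := by
  have hx' : ∀ i, (x i ^ p) ^ p⁻¹ = x i := fun i => rpow_rpow_inv (hx i) hp.ne'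
  have hy' : ∀ i, (y i ^ q) ^ q⁻¹ = y i := fun i => rpow_rpow_inv (hy i) hq.ne'
  simpa only [hx', hy', one_div, inv_inv] using
    summable_and_inner_le_Lp_mul_Lq_tsum_of_nonneg (HolderConjugate.inv_inv hp hq hpq)
      (fun i => rpow_nonneg (hx i) p) (fun i => rpow_nonneg (hy i) q)
      (by simpa only [hx'] using hxs) (by simpa only [hy'] using hys)

theorem mul_tsum_le_rpow_mul_rpow_of_le {w s t : ι → ℝ} {K p q : ℝ} (hp : 0 < p) (hq : 0 < q)
    (hpq : p + q = 1) (hw : ∀ i, 0 ≤ w i) (hs : ∀ i, 0 ≤ s i) (ht : ∀ i, 0 ≤ t i)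
    (hK : ∀ i, w i ≠ 0 → K ≤ s i ^ p * t i ^ q) (hws : Summable w)
    (hsw : Summable (fun i => s i * w i)) (htw : Summable (fun i => t i * w i)) :
    K * ∑' i, w i ≤ (∑' i, s i * w i) ^ p * (∑' i, t i * w i) ^ q := by
  obtain ⟨hsum, hle⟩ := summable_and_tsum_rpow_mul_rpow_le hp hq hpq
    (fun i => mul_nonneg (hs i) (hw i)) (fun i => mul_nonneg (ht i) (hw i)) hsw htw
  have hpoint : ∀ i, K * w i ≤ (s i * w i) ^ p * (t i * w i) ^ q := by
    intro i
    rcases eq_or_ne (w i) 0 with h0 | h0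
    · simp [h0, zero_rpow hp.ne', zero_rpow hq.ne']
    calc K * w i ≤ s i ^ p * t i ^ q * w i := mul_le_mul_of_nonneg_right (hK i h0) (hw i)
      _ = s i ^ p * t i ^ q * (w i ^ p * w i ^ q) := by
        rw [← rpow_add' (hw i) (by rw [hpq]; exact one_ne_zero), hpq, rpow_one]
      _ = (s i * w i) ^ p * (t i * w i) ^ q := by
        rw [mul_rpow (hs i) (hw i), mul_rpow (ht i) (hw i)]; ring
  calc K * ∑' i, w i = ∑' i, K * w i := tsum_mul_left.symm
    _ ≤ ∑' i, (s i * w i) ^ p * (t i * w i) ^ q := (hws.mul_left K).tsum_le_tsum hpoint hsum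
    _ ≤ _ := hle

end Interpolation

theorem rpow_one_div_succ_le_of_le_pow_mul {c s t : ℝ} {n : ℕ} (hc : 0 ≤ c) (hs : 0 ≤ s)
    (ht : 0 ≤ t) (h : c ≤ s ^ n * t) :
    c ^ (1 / (n + 1 : ℝ)) ≤ s ^ (n / (n + 1 : ℝ)) * t ^ (1 / (n + 1 : ℝ)) := by
  calc c ^ (1 / (n + 1 : ℝ)) ≤ (s ^ n * t) ^ (1 / (n + 1 : ℝ)) :=
        rpow_le_rpow hc h (by positivity)
    _ = s ^ (n / (n + 1 : ℝ)) * t ^ (1 / (n + 1 : ℝ)) := by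
        rw [mul_rpow (by positivity) ht, ← rpow_natCast, ← rpow_mul hs, mul_one_div]

theorem sqrt_rpow_of_nonneg {x : ℝ} (hx : 0 ≤ x) (r : ℝ) : √(x ^ r) = √x ^ r := by
  rw [sqrt_eq_rpow, sqrt_eq_rpow, ← rpow_mul hx, ← rpow_mul hx, mul_comm]

theorem sq_le_pow_mul_sq_of_div_sqrt_pow_le_abs {c s t : ℝ} {n : ℕ} (hc : 0 ≤ c) (hs : 0 < s)
    (h : c / √s ^ n ≤ |t|) : c ^ 2 ≤ s ^ n * t ^ 2 := by
  have hroot : c ≤ √s ^ n * |t| := by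
    rwa [div_le_iff₀' (pow_pos (sqrt_pos.mpr hs) n)] at h
  calc c ^ 2 ≤ (√s ^ n * |t|) ^ 2 := pow_le_pow_left₀ hc hroot 2
    _ = s ^ n * t ^ 2 := by rw [mul_pow, sq_abs, ← pow_mul, mul_comm n, pow_mul, sq_sqrt hs.le]

theorem sq_mul_add_mul_le (a₁ a₂ b₁ b₂ : ℝ) :
    (a₁ * b₁ + a₂ * b₂) ^ 2 ≤ (a₁ ^ 2 + a₂ ^ 2) * (b₁ ^ 2 + b₂ ^ 2) := by
  nlinarith [sq_nonneg (a₁ * b₂ - a₂ * b₁)]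

theorem IsH1.summable_dirSq {a : ℤ × ℤ → ℂ} (ha : IsH1 a) (α : ℝ × ℝ) :
    Summable (fun k : ℤ × ℤ => (α.1 * k.1 + α.2 * k.2) ^ 2 * ‖a k‖ ^ 2) := by
  refine Summable.of_nonneg_of_le (fun k => by positivity) (fun k => ?_)
    (ha.2.mul_left (α.1 ^ 2 + α.2 ^ 2))
  rw [← mul_assoc]
  exact mul_le_mul_of_nonneg_right (sq_mul_add_mul_le _ _ _ _) (by positivity)

theorem sq_add_sq_intCast_pos {k₁ k₂ : ℤ} (hk : ¬ (k₁ = 0 ∧ k₂ = 0)) :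
    0 < (k₁ : ℝ) ^ 2 + (k₂ : ℝ) ^ 2 := by
  rcases not_and_or.mp hk with h | h
  · have : (k₁ : ℝ) ≠ 0 := Int.cast_ne_zero.mpr h
    positivity
  · have : (k₂ : ℝ) ≠ 0 := Int.cast_ne_zero.mpr h
    positivity

theorem rpow_mul_sqrt_normSq_le_of_diophantine {n : ℕ} (hn : 0 < n) {α₁ α₂ c : ℝ} (hc : 0 ≤ c)
    (hα : ∀ k₁ k₂ : ℤ, ¬ (k₁ = 0 ∧ k₂ = 0) →
      c / √((k₁ : ℝ) ^ 2 + (k₂ : ℝ) ^ 2) ^ n ≤ |α₁ * k₁ + α₂ * k₂|)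
    {a : ℤ × ℤ → ℂ} (ha : IsH1 a) (ha0 : a 0 = 0) :
    c ^ (1 / (n + 1 : ℝ)) * √(normSq a) ≤
      √(gradSq a) ^ (n / (n + 1 : ℝ)) * √(dirSq (α₁, α₂) a) ^ (1 / (n + 1 : ℝ)) := by
  have hq : (0 : ℝ) < 1 / (n + 1) := by positivity
  have hp : (0 : ℝ) < n / (n + 1) := by positivity
  have hpq : (n : ℝ) / (n + 1) + 1 / (n + 1) = 1 := by field_simp
  have hpoint : ∀ k : ℤ × ℤ, ‖a k‖ ^ 2 ≠ 0 →
      (c ^ 2) ^ (1 / (n + 1 : ℝ)) ≤ ((k.1 : ℝ) ^ 2 + (k.2 : ℝ) ^ 2) ^ (n / (n + 1 : ℝ)) *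
        ((α₁ * k.1 + α₂ * k.2) ^ 2) ^ (1 / (n + 1 : ℝ)) := by
    intro k hk
    have hk0 : ¬ (k.1 = 0 ∧ k.2 = 0) := by
      rintro ⟨h₁, h₂⟩
      obtain rfl : k = 0 := Prod.ext h₁ h₂
      simp [ha0] at hk
    have hs := sq_add_sq_intCast_pos hk0
    exact rpow_one_div_succ_le_of_le_pow_mul (sq_nonneg c) hs.le (sq_nonneg _)
      (sq_le_pow_mul_sq_of_div_sqrt_pow_le_abs hc hs (hα _ _ hk0))
  have hkey : (c ^ 2) ^ (1 / (n + 1 : ℝ)) * normSq a ≤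
      gradSq a ^ (n / (n + 1 : ℝ)) * dirSq (α₁, α₂) a ^ (1 / (n + 1 : ℝ)) :=
    mul_tsum_le_rpow_mul_rpow_of_le hp hq hpq (fun _ => by positivity) (fun _ => by positivity)
      (fun _ => sq_nonneg _) hpoint ha.1 ha.2 (ha.summable_dirSq (α₁, α₂))
  have hG : 0 ≤ gradSq a := tsum_nonneg fun _ => by positivity
  have hD : 0 ≤ dirSq (α₁, α₂) a := tsum_nonneg fun _ => by positivity
  calc c ^ (1 / (n + 1 : ℝ)) * √(normSq a) = √((c ^ 2) ^ (1 / (n + 1 : ℝ)) * normSq a) := by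
        rw [sqrt_mul (by positivity), sqrt_rpow_of_nonneg (sq_nonneg c), sqrt_sq hc]
    _ ≤ √(gradSq a ^ (n / (n + 1 : ℝ)) * dirSq (α₁, α₂) a ^ (1 / (n + 1 : ℝ))) :=
        sqrt_le_sqrt hkey
    _ = √(gradSq a) ^ (n / (n + 1 : ℝ)) * √(dirSq (α₁, α₂) a) ^ (1 / (n + 1 : ℝ)) := by
        rw [sqrt_mul (by positivity), sqrt_rpow_of_nonneg hG, sqrt_rpow_of_nonneg hD]

theorem stmt_14 (α₁ α₂ : ℝ) (c : ℝ) (hc : 0 < c)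
    (hα : ∀ k₁ k₂ : ℤ, ¬ (k₁ = 0 ∧ k₂ = 0) →
      |α₁ * k₁ + α₂ * k₂| ≥ c / Real.sqrt ((k₁ : ℝ) ^ 2 + (k₂ : ℝ) ^ 2) ^ 7) :
    ∃ c' > (0 : ℝ), ∀ a : ℤ × ℤ → ℂ, IsH1 a → a 0 = 0 →
      Real.sqrt (gradSq a) ^ ((7 : ℝ) / 8) *
          Real.sqrt (dirSq (α₁, α₂) a) ^ ((1 : ℝ) / 8)
        ≥ c' * Real.sqrt (normSq a) := by
  refine ⟨c ^ ((1 : ℝ) / 8), rpow_pos_of_pos hc _, fun a ha ha0 => ?_⟩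
  have h := rpow_mul_sqrt_normSq_le_of_diophantine (n := 7) (by norm_num) hc.le hα ha ha0
  norm_num at h ⊢
  exact h
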